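/- arXiv:math/0306215 — 2 statements merged into one kernel-verified Lean document; each statement's English description precedes it below -/
import Mathlib

section
/- For all λ, μ ∈ P(m|n), K^{-1}_{λ,μ} = Σ ε(σ), where the sum is over all pairs (w,σ) ∈ S_n^λ × S_n satisfying the vector equation w(λ) + σ(δ(n)) = μ + δ(n) in ℕ^n, and ε(σ) is the sign of the permutation σ. -/
open Finset MvPolynomial

/-- The `p`-th entry of an `n`-tuple, with default value `0` out of range. -/
def nth (n : ℕ) (f : Fin n → ℕ) (p : ℕ) : ℕ := if h : p < n then f ⟨p, h⟩ else 0

/-- `a_α = det (x_j ^ α_i)`. -/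
noncomputable def aDet (n : ℕ) (α : Fin n → ℕ) : MvPolynomial (Fin n) ℤ :=
  (Matrix.of fun i j : Fin n => (X j : MvPolynomial (Fin n) ℤ) ^ α i).det

/-- `x ^ β = ∏ x_i ^ β_i`. -/
noncomputable def xpow (n : ℕ) (β : Fin n → ℕ) : MvPolynomial (Fin n) ℤ :=
  ∏ i, X i ^ β i

/-- The monomial symmetric polynomial `m_lam(n) = Σ_{w ∈ Sₙ^lam} x^{w(lam)}`:
the sum of `x^β` over all distinct rearrangements `β` of `lam`. -/
noncomputable def msym (n : ℕ) (lam : Fin n → ℕ) : MvPolynomial (Fin n) ℤ :=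
  ∑ β ∈ Finset.univ.image (fun σ : Equiv.Perm (Fin n) => lam ∘ σ), xpow n β

/-- `δ(n) = (0, 1, …, n-1)`. -/
def deltaN (n : ℕ) : Fin n → ℕ := fun i => (i : ℕ)

/-- `P(m∣n)`: partitions of `m` as nondecreasing `n`-tuples (zeros at the beginning). -/
def Par (n m : ℕ) : Finset (Fin n → ℕ) :=
  (Fintype.piFinset fun _ : Fin n => Finset.range (m + 1)).filter
    fun μ => (∀ i j : Fin n, i ≤ j → μ i ≤ μ j) ∧ ∑ i, μ i = m

/-- `K` is the inverse Kostka matrix in `n` variables: for every weight `m` and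
every `lam ∈ P(m∣n)`, `m_lam(n) · a_{δ(n)} = Σ_{μ ∈ P(m∣n)} K lam μ · a_{μ+δ(n)}`
(equivalently `m_lam(n) = Σ_μ K lam μ · s_μ(n)`). -/
def IsInvKostka (n : ℕ) (K : (Fin n → ℕ) → (Fin n → ℕ) → ℤ) : Prop :=
  ∀ m : ℕ, ∀ lam ∈ Par n m,
    msym n lam * aDet n (deltaN n) =
      ∑ μ ∈ Par n m, C (K lam μ) * aDet n (fun i => μ i + (i : ℕ))

/-!
Take the coefficient of `x^(μ + δ)` on both sides of the defining identity of `K`.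
On the right, `a_(ν + δ) = Σ_σ ε(σ) x^(σ(ν + δ))`; a rearrangement of the strictly increasing
tuple `ν + δ` equals the strictly increasing tuple `μ + δ` only if `ν = μ` and `σ = 1`, so the
right-hand side contributes exactly `K lam μ`. On the left, `m_lam · a_δ` is the signed sum of the
monomials `x^(β + σ(δ))`, whose coefficient at `μ + δ` is the claimed sum.
-/

theorem StrictMono.eq_and_eq_one_of_comp_perm_eq {ι γ : Type*} [LinearOrder ι] [WellFoundedLT ι]
    [Preorder γ] {f g : ι → γ} (hf : StrictMono f) (hg : StrictMono g) {σ : Equiv.Perm ι}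
    (h : f ∘ σ = g) : f = g ∧ σ = 1 := by
  have hfg : f = g := (hf.range_inj hg).1 (h ▸ (σ.surjective.range_comp f).symm)
  refine ⟨hfg, Equiv.ext fun i => hf.injective ?_⟩
  rw [← hfg] at h
  exact congrFun h i

lemma xpow_add (n : ℕ) (β γ : Fin n → ℕ) : xpow n (β + γ) = xpow n β * xpow n γ := by
  simp only [xpow, Pi.add_apply, pow_add, prod_mul_distrib]

lemma coeff_xpow (n : ℕ) (β γ : Fin n → ℕ) :
    coeff (Finsupp.equivFunOnFinite.symm γ) (xpow n β) = if β = γ then 1 else 0 := by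
  have : xpow n β = monomial (Finsupp.equivFunOnFinite.symm β) 1 := by
    rw [xpow, monomial_eq, Finsupp.prod_fintype _ _ fun i => pow_zero _, map_one, one_mul]
    rfl
  simp only [this, coeff_monomial, EmbeddingLike.apply_eq_iff_eq]

lemma aDet_eq_sum_sign_xpow (n : ℕ) (α : Fin n → ℕ) :
    aDet n α = ∑ σ : Equiv.Perm (Fin n), (Equiv.Perm.sign σ : ℤ) • xpow n (α ∘ σ) := by
  rw [aDet, Matrix.det_apply]
  refine sum_congr rfl fun σ _ => ?_
  simp only [xpow, Matrix.of_apply, Units.smul_def, zsmul_eq_mul, Function.comp_apply]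

lemma coeff_xpow_mul_aDet (n : ℕ) (β α γ : Fin n → ℕ) :
    coeff (Finsupp.equivFunOnFinite.symm γ) (xpow n β * aDet n α) =
      ∑ σ ∈ (univ : Finset (Equiv.Perm (Fin n))).filter (fun σ => ∀ i, β i + α (σ i) = γ i),
        ((Equiv.Perm.sign σ : ℤˣ) : ℤ) := by
  simp only [aDet_eq_sum_sign_xpow, mul_sum, mul_smul_comm, ← xpow_add, coeff_sum, coeff_smul,
    coeff_xpow, smul_eq_mul, mul_ite, mul_one, mul_zero, sum_filter, funext_iff, Pi.add_apply,
    Function.comp_apply]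

lemma coeff_aDet_of_strictMono (n : ℕ) {α γ : Fin n → ℕ} (hα : StrictMono α)
    (hγ : StrictMono γ) :
    coeff (Finsupp.equivFunOnFinite.symm γ) (aDet n α) = if α = γ then 1 else 0 := by
  rw [aDet_eq_sum_sign_xpow, coeff_sum, sum_eq_single 1]
  · simp [coeff_xpow]
  · intro σ _ hσ
    rw [coeff_smul, coeff_xpow, if_neg fun h => hσ (hα.eq_and_eq_one_of_comp_perm_eq hγ h).2,
      smul_zero]
  · simp

lemma monotone_of_mem_Par {n m : ℕ} {μ : Fin n → ℕ} (hμ : μ ∈ Par n m) : Monotone μ :=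
  fun i j hij => (mem_filter.1 hμ).2.1 i j hij

lemma coeff_aDet_add_deltaN {n : ℕ} {ν μ : Fin n → ℕ} (hν : Monotone ν) (hμ : Monotone μ) :
    coeff (Finsupp.equivFunOnFinite.symm fun i => μ i + (i : ℕ)) (aDet n fun i => ν i + (i : ℕ)) =
      if ν = μ then 1 else 0 := by
  simp only [coeff_aDet_of_strictMono n (hν.add_strictMono Fin.val_strictMono)
    (hμ.add_strictMono Fin.val_strictMono), funext_iff, add_left_inj]

theorem stmt1_general (n m : ℕ)
    (K : (Fin n → ℕ) → (Fin n → ℕ) → ℤ) (hK : IsInvKostka n K)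
    (lam μ : Fin n → ℕ) (hlam : lam ∈ Par n m) (hμ : μ ∈ Par n m) :
    K lam μ =
      ∑ β ∈ Finset.univ.image (fun w : Equiv.Perm (Fin n) => lam ∘ w),
        ∑ σ ∈ (Finset.univ : Finset (Equiv.Perm (Fin n))).filter
            (fun σ => ∀ i : Fin n, β i + ((σ i : ℕ)) = μ i + (i : ℕ)),
          ((Equiv.Perm.sign σ : ℤˣ) : ℤ) := by
  set t := Finsupp.equivFunOnFinite.symm fun i => μ i + (i : ℕ)
  calc K lam μ = ∑ ν ∈ Par n m, K lam ν * coeff t (aDet n fun i => ν i + (i : ℕ)) := by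
        rw [sum_congr rfl fun ν hν => by
          rw [coeff_aDet_add_deltaN (monotone_of_mem_Par hν) (monotone_of_mem_Par hμ)]]
        simp only [mul_ite, mul_one, mul_zero, sum_ite_eq', if_pos hμ]
    _ = coeff t (msym n lam * aDet n (deltaN n)) := by
        simp only [hK m lam hlam, coeff_sum, coeff_C_mul]
    _ = _ := by
        rw [msym, sum_mul, coeff_sum]
        exact sum_congr rfl fun β _ => coeff_xpow_mul_aDet n β _ _

/-- Theorem 2: `K⁻¹_{λ,μ} = Σ ε(σ)` over solutions `(w,σ)` of `w(λ) + σ(δ(n)) = μ + δ(n)`,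
where `w` ranges over coset representatives `Sₙ^λ` (equivalently, `w(λ)` ranges over the
distinct rearrangements `β` of `λ`) and `σ` over `Sₙ`. -/
theorem stmt1 (n m : ℕ) (hmn : m ≤ n)
    (K : (Fin n → ℕ) → (Fin n → ℕ) → ℤ) (hK : IsInvKostka n K)
    (lam μ : Fin n → ℕ) (hlam : lam ∈ Par n m) (hμ : μ ∈ Par n m) :
    K lam μ =
      ∑ β ∈ Finset.univ.image (fun w : Equiv.Perm (Fin n) => lam ∘ w),
        ∑ σ ∈ (Finset.univ : Finset (Equiv.Perm (Fin n))).filter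
            (fun σ => ∀ i : Fin n, β i + ((σ i : ℕ)) = μ i + (i : ℕ)),
          ((Equiv.Perm.sign σ : ℤˣ) : ℤ) :=
  stmt1_general n m K hK lam μ hlam hμ
end

section
/- For λ = (λ_1,…,λ_n), μ = (μ_1,…,μ_n) ∈ P(m|n), write λ > μ if the last index i with λ_i ≠ μ_i satisfies λ_i > μ_i, and let l(λ) denote the number of nonzero entries of λ. If either λ < μ, or l(λ) > l(μ), then K^{-1}_{λ,μ} = 0. -/
open Finset MvPolynomial

section aux
variable {n : ℕ}

noncomputable def fs (f : Fin n → ℕ) : Fin n →₀ ℕ := Finsupp.equivFunOnFinite.symm f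

@[simp] lemma fs_apply (f : Fin n → ℕ) (i : Fin n) : fs f i = f i := rfl

lemma fs_inj : Function.Injective (fs (n := n)) := Finsupp.equivFunOnFinite.symm.injective

lemma xpow_eq (β : Fin n → ℕ) : xpow n β = monomial (fs β) 1 := by
  rw [xpow, MvPolynomial.monomial_eq, map_one, one_mul, Finsupp.prod_fintype]
  · rfl
  · intro i; exact pow_zero _

lemma aDet_eq (α : Fin n → ℕ) :
    aDet n α = ∑ σ : Equiv.Perm (Fin n),
      ((Equiv.Perm.sign σ : ℤ)) • monomial (fs (α ∘ σ)) (1 : ℤ) := by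
  rw [aDet, Matrix.det_apply]
  refine Finset.sum_congr rfl fun σ _ => ?_
  rw [Units.smul_def]
  congr 1
  rw [← xpow_eq, xpow]
  rfl

lemma coeff_aDet (α : Fin n → ℕ) (t : Fin n →₀ ℕ) :
    coeff t (aDet n α) = ∑ σ : Equiv.Perm (Fin n),
      if fs (α ∘ σ) = t then ((Equiv.Perm.sign σ : ℤ)) else 0 := by
  rw [aDet_eq, coeff_sum]
  refine Finset.sum_congr rfl fun σ _ => ?_
  rw [coeff_smul, coeff_monomial]
  split <;> simp

def topSeg (n k : ℕ) : Finset (Fin n) := Finset.univ.filter fun i => k ≤ (i : ℕ)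

lemma card_topSeg (n k : ℕ) : (topSeg n k).card = n - k := by
  rcases lt_or_ge k n with h | h
  · have : topSeg n k = Finset.Ici (⟨k, h⟩ : Fin n) := by
      ext i; simp [topSeg, Fin.le_def]
    rw [this, Fin.card_Ici]
  · have : topSeg n k = ∅ := by
      ext i
      simp only [topSeg, mem_filter, mem_univ, true_and, Finset.notMem_empty, iff_false]
      have := i.isLt; omega
    rw [this, Finset.card_empty]; omega

lemma sum_perm_topSeg (g : Fin n → ℕ) (hg : ∀ i j : Fin n, i ≤ j → g i ≤ g j)
    (π : Equiv.Perm (Fin n)) (k : ℕ) :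
    ∑ i ∈ topSeg n k, g (π i) ≤ ∑ i ∈ topSeg n k, g i := by
  have himg : ∑ i ∈ topSeg n k, g (π i) = ∑ j ∈ (topSeg n k).image π, g j :=
    (Finset.sum_image (fun a _ b _ h => π.injective h)).symm
  rw [himg]
  set T := topSeg n k with hT
  set s := T.image π with hs
  have hcard : s.card = T.card := Finset.card_image_of_injective _ π.injective
  have hdiff : (s \ T).card = (T \ s).card := by
    have h1 := Finset.card_sdiff_add_card_inter s T
    have h2 := Finset.card_sdiff_add_card_inter T s
    rw [Finset.inter_comm] at h2
    omega
  have h1 : ∑ j ∈ s, g j = ∑ j ∈ s ∩ T, g j + ∑ j ∈ s \ T, g j :=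
    (Finset.sum_inter_add_sum_sdiff s T g).symm
  have h2 : ∑ j ∈ T, g j = ∑ j ∈ T ∩ s, g j + ∑ j ∈ T \ s, g j :=
    (Finset.sum_inter_add_sum_sdiff T s g).symm
  rw [h1, h2, Finset.inter_comm]
  have hkey : ∑ j ∈ s \ T, g j ≤ ∑ j ∈ T \ s, g j := by
    rcases lt_or_ge k n with hk | hk
    · set M := g ⟨k, hk⟩ with hM
      have ha : ∀ a ∈ s \ T, g a ≤ M := by
        intro a haa
        have := (Finset.mem_sdiff.mp haa).2
        simp only [hT, topSeg, mem_filter, mem_univ, true_and, not_le] at this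
        exact hg a ⟨k, hk⟩ (le_of_lt this)
      have hb : ∀ b ∈ T \ s, M ≤ g b := by
        intro b hbb
        have := (Finset.mem_sdiff.mp hbb).1
        simp only [hT, topSeg, mem_filter, mem_univ, true_and] at this
        exact hg ⟨k, hk⟩ b this
      calc ∑ j ∈ s \ T, g j ≤ (s \ T).card • M := Finset.sum_le_card_nsmul _ _ _ ha
        _ = (T \ s).card • M := by rw [hdiff]
        _ ≤ ∑ j ∈ T \ s, g j := Finset.card_nsmul_le_sum _ _ _ hb
    · have hTe : T = ∅ := by
        rw [hT]; ext i
        simp only [topSeg, mem_filter, mem_univ, true_and, Finset.notMem_empty, iff_false]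
        have := i.isLt; omega
      simp [hTe, hs]
  omega

lemma dom_ineq (lam μ : Fin n → ℕ) (hlam : ∀ i j : Fin n, i ≤ j → lam i ≤ lam j)
    (τ σ : Equiv.Perm (Fin n)) (heq : ∀ j : Fin n, lam (τ j) + ((σ j : ℕ)) = μ j + (j : ℕ))
    (k : ℕ) : ∑ i ∈ topSeg n k, μ i ≤ ∑ i ∈ topSeg n k, lam i := by
  have h1 : ∑ i ∈ topSeg n k, (μ i + (i : ℕ)) = ∑ i ∈ topSeg n k, (lam (τ i) + ((σ i : ℕ))) :=
    Finset.sum_congr rfl fun i _ => (heq i).symm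
  rw [Finset.sum_add_distrib, Finset.sum_add_distrib] at h1
  have h2 := sum_perm_topSeg lam hlam τ k
  have h3 := sum_perm_topSeg (fun i : Fin n => (i : ℕ)) (fun i j hij => hij) σ k
  omega

lemma no_solution (m : ℕ) (lam μ : Fin n → ℕ)
    (hlam_mono : ∀ i j : Fin n, i ≤ j → lam i ≤ lam j) (hlam_sum : ∑ i, lam i = m)
    (hμ_mono : ∀ i j : Fin n, i ≤ j → μ i ≤ μ j) (hμ_sum : ∑ i, μ i = m)
    (h : (∃ i : Fin n, lam i < μ i ∧ ∀ j : Fin n, i < j → lam j = μ j) ∨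
      (Finset.univ.filter fun p => μ p ≠ 0).card <
        (Finset.univ.filter fun p => lam p ≠ 0).card)
    (τ σ : Equiv.Perm (Fin n))
    (heq : ∀ j : Fin n, lam (τ j) + ((σ j : ℕ)) = μ j + (j : ℕ)) : False := by
  classical
  rcases h with ⟨i0, hlt, hgt⟩ | hcard
  · have hdom := dom_ineq lam μ hlam_mono τ σ heq i0.val
    have hstrict : ∑ i ∈ topSeg n i0.val, lam i < ∑ i ∈ topSeg n i0.val, μ i := by
      apply Finset.sum_lt_sum
      · intro i hi
        simp only [topSeg, mem_filter, mem_univ, true_and] at hi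
        rcases eq_or_lt_of_le (show i0 ≤ i from hi) with heqi | hlti
        · exact heqi ▸ hlt.le
        · exact (hgt i hlti).le
      · exact ⟨i0, by simp [topSeg], hlt⟩
    omega
  · set c := (Finset.univ.filter fun p => μ p ≠ 0).card with hc
    have hc_le : c ≤ n := by
      rw [hc]
      calc (Finset.univ.filter fun p => μ p ≠ 0).card ≤ (Finset.univ : Finset (Fin n)).card :=
            Finset.card_filter_le _ _
        _ = n := by simp
    set k := n - c with hk
    have hzero : ∀ i : Fin n, (i : ℕ) < k → μ i = 0 := by
      intro i hi
      by_contra hne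
      have hsub : topSeg n i.val ⊆ Finset.univ.filter fun p => μ p ≠ 0 := by
        intro j hj
        simp only [topSeg, mem_filter, mem_univ, true_and] at hj ⊢
        have : μ i ≤ μ j := hμ_mono i j hj
        omega
      have hcc := Finset.card_le_card hsub
      rw [card_topSeg, ← hc] at hcc
      have := i.isLt
      omega
    have hμT : ∑ i ∈ topSeg n k, μ i = m := by
      have hsplit := Finset.sum_filter_add_sum_filter_not Finset.univ
        (fun i : Fin n => k ≤ (i : ℕ)) μ
      have hz : ∑ i ∈ Finset.univ.filter (fun i : Fin n => ¬ k ≤ (i : ℕ)), μ i = 0 :=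
        Finset.sum_eq_zero fun i hi => hzero i
          (by have := (Finset.mem_filter.mp hi).2; omega)
      rw [hz] at hsplit
      simpa [topSeg, hμ_sum] using hsplit
    have hex : ∃ i : Fin n, (i : ℕ) < k ∧ lam i ≠ 0 := by
      by_contra hno
      push_neg at hno
      have hsub : (Finset.univ.filter fun p => lam p ≠ 0) ⊆ topSeg n k := by
        intro j hj
        simp only [mem_filter, mem_univ, true_and] at hj
        simp only [topSeg, mem_filter, mem_univ, true_and]
        by_contra hjk
        exact hj (hno j (by omega))
      have hcc := Finset.card_le_card hsub
      rw [card_topSeg] at hcc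
      omega
    obtain ⟨i1, hi1k, hi1ne⟩ := hex
    have hi1T : i1 ∉ topSeg n k := by
      simp only [topSeg, mem_filter, mem_univ, true_and]
      omega
    have hle : lam i1 + ∑ i ∈ topSeg n k, lam i ≤ m := by
      have hins := Finset.sum_insert (f := lam) hi1T
      have hsub : ∑ i ∈ insert i1 (topSeg n k), lam i ≤ ∑ i, lam i :=
        Finset.sum_le_sum_of_subset (Finset.subset_univ _)
      omega
    have hdom := dom_ineq lam μ hlam_mono τ σ heq k
    omega

end aux

/-- Corollary 2 (2): if `λ < μ` (the last index where they differ has `λ_i < μ_i`),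
or `l(λ) > l(μ)`, then `K⁻¹_{λ,μ} = 0`. -/
theorem stmt6 (n m : ℕ) (hmn : m ≤ n)
    (K : (Fin n → ℕ) → (Fin n → ℕ) → ℤ) (hK : IsInvKostka n K)
    (lam μ : Fin n → ℕ) (hlam : lam ∈ Par n m) (hμ : μ ∈ Par n m)
    (h : (∃ i : Fin n, lam i < μ i ∧ ∀ j : Fin n, i < j → lam j = μ j) ∨
      (Finset.univ.filter fun p => μ p ≠ 0).card <
        (Finset.univ.filter fun p => lam p ≠ 0).card) :
    K lam μ = 0 := by
  classical
  have hμ' := (Finset.mem_filter.mp hμ).2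
  obtain ⟨hμ_mono, hμ_sum⟩ := hμ'
  have hlam' := (Finset.mem_filter.mp hlam).2
  obtain ⟨hlam_mono, hlam_sum⟩ := hlam'
  obtain ⟨t, ht⟩ : ∃ t : Fin n →₀ ℕ, t = fs (fun i => μ i + (i : ℕ)) := ⟨_, rfl⟩
  have key := congrArg (MvPolynomial.coeff t) (hK m lam hlam)
  have hLHS : MvPolynomial.coeff t (msym n lam * aDet n (deltaN n)) = 0 := by
    rw [msym, Finset.sum_mul, coeff_sum]
    refine Finset.sum_eq_zero fun β hβ => ?_
    obtain ⟨τ, -, hτ⟩ := Finset.mem_image.mp hβ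
    rw [xpow_eq, aDet_eq, Finset.mul_sum, coeff_sum]
    refine Finset.sum_eq_zero fun σ _ => ?_
    rw [mul_smul_comm, coeff_smul, monomial_mul, one_mul, coeff_monomial, if_neg, smul_zero]
    intro hcond
    rw [ht] at hcond
    refine no_solution m lam μ hlam_mono hlam_sum hμ_mono hμ_sum h τ σ (fun j => ?_)
    have hj : β j + ((σ j : ℕ)) = μ j + (j : ℕ) := DFunLike.congr_fun hcond j
    rw [← hτ] at hj
    exact hj
  have hdiag : ∀ ν ∈ Par n m,
      MvPolynomial.coeff t (aDet n (fun i => ν i + (i : ℕ))) = if ν = μ then 1 else 0 := by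
    intro ν hν
    have hν_mono := (Finset.mem_filter.mp hν).2.1
    rw [coeff_aDet]
    by_cases heq : ν = μ
    · subst heq
      rw [if_pos rfl]
      rw [Finset.sum_eq_single (1 : Equiv.Perm (Fin n))]
      · have hcomp : ((fun i => ν i + (i : ℕ)) ∘ ⇑(1 : Equiv.Perm (Fin n)))
            = fun i => ν i + (i : ℕ) := by funext i; simp
        rw [hcomp, ht, if_pos rfl, Equiv.Perm.sign_one, Units.val_one]
      · intro σ _ hσ
        rw [if_neg]
        intro hcond
        rw [ht] at hcond
        have hfun : ((fun i => ν i + (i : ℕ)) ∘ ⇑σ) = fun i => ν i + (i : ℕ) := fs_inj hcond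
        have hstrict : StrictMono (fun i : Fin n => ν i + (i : ℕ)) :=
          fun a b hab => Nat.add_lt_add_of_le_of_lt (hν_mono a b hab.le) hab
        exact hσ (Equiv.ext fun i => hstrict.injective (congrFun hfun i))
      · intro hh; exact absurd (Finset.mem_univ _) hh
    · rw [if_neg heq]
      refine Finset.sum_eq_zero fun σ _ => ?_
      rw [if_neg]
      intro hcond
      rw [ht] at hcond
      have hfun : ((fun i => ν i + (i : ℕ)) ∘ ⇑σ) = fun i => μ i + (i : ℕ) := fs_inj hcond
      have hmono1 : Monotone fun i : Fin n => ν i + (i : ℕ) :=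
        fun a b hab => Nat.add_le_add (hν_mono a b hab) hab
      have hmono2 : Monotone ((fun i : Fin n => ν i + (i : ℕ)) ∘ ⇑σ) := by
        rw [hfun]
        exact fun a b hab => Nat.add_le_add (hμ_mono a b hab) hab
      have huniq := Tuple.unique_monotone (f := fun i : Fin n => ν i + (i : ℕ))
        (σ := σ) (τ := 1) hmono2 (by simpa using hmono1)
      refine heq (funext fun i => ?_)
      have h1 : ν (σ i) + ((σ i : ℕ)) = μ i + (i : ℕ) := congrFun hfun i
      have h2 : ν (σ i) + ((σ i : ℕ)) = ν i + (i : ℕ) := congrFun huniq i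
      exact Nat.add_right_cancel (h2.symm.trans h1)
  have hRHS : MvPolynomial.coeff t
      (∑ ν ∈ Par n m, C (K lam ν) * aDet n (fun i => ν i + (i : ℕ))) = K lam μ := by
    rw [coeff_sum]
    have : ∀ ν ∈ Par n m,
        MvPolynomial.coeff t (C (K lam ν) * aDet n (fun i => ν i + (i : ℕ)))
          = if ν = μ then K lam μ else 0 := by
      intro ν hν
      rw [coeff_C_mul, hdiag ν hν]
      by_cases heq : ν = μ
      · subst heq; simp
      · simp [heq]
    rw [Finset.sum_congr rfl this, Finset.sum_ite_eq' (Par n m) μ fun _ => K lam μ,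
      if_pos hμ]
  rw [hLHS, hRHS] at key
  exact key.symm
end
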